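/- arXiv:0908.2061 — 2 statements merged into one kernel-verified Lean document; each statement's English description precedes it below -/
import Mathlib

section
/- Let T^(h) be the complete binary tree of height h with all edge lengths τ_e ≤ g where g < g* = ln√2. Let Ψ be the homogeneous unit flow (each leaf x gets Ψ(x) = 2^{-h}, each edge e at depth d carries flow 2^{-d}). Then K_Ψ = Σ_{e∈E} R_ρ(e)Ψ(e)² ≤ 1/(1 - e^{-2(g* - g)}), a bound independent of h. -/
/-- Non-root vertices of the complete binary tree of height `h`: a vertex at depth `d+1`
(for `d < h`) is given by its address, a Boolean string of length `d+1`.  Each such vertex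
is identified with the edge `e` above it (so the vertex is `e_↓`). -/
def Vtx (h : ℕ) : Type := Σ d : Fin h, (Fin (d.1 + 1) → Bool)

instance (h : ℕ) : Fintype (Vtx h) := by unfold Vtx; infer_instance

/-- The ancestor of `v` at depth `j+1` (a prefix of the address of `v`). -/
def anc {h : ℕ} (v : Vtx h) (j : Fin (v.1.1 + 1)) : Vtx h :=
  ⟨⟨j.1, lt_of_lt_of_le j.2 (Nat.succ_le_of_lt v.1.2)⟩,
    fun i => v.2 ⟨i.1, lt_of_lt_of_le i.2 (Nat.succ_le_of_lt j.2)⟩⟩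

/-- The distance `τ(ρ, e_↓)` from the root to the vertex `v = e_↓`, i.e. the sum of the
edge lengths of all ancestor edges of `v` (including the edge above `v` itself). -/
noncomputable def Droot {h : ℕ} (τ : Vtx h → ℝ) (v : Vtx h) : ℝ :=
  ∑ j : Fin (v.1.1 + 1), τ (anc v j)

/-- Lemma 4: for the complete binary tree of height `h` with edge lengths
`0 < τ_e ≤ g < g* = ln √2` and the homogeneous unit flow (an edge at depth `d+1` carries
flow `2^{-(d+1)}`), the quantity `K_Ψ = ∑_e R_ρ(e) Ψ(e)²`, with
`R_ρ(e) = (1 - e^{-2τ_e}) e^{2τ(ρ,e_↓)}`, is bounded by `1/(1 - e^{-2(g*-g)})`,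
uniformly in `h`. -/
theorem stmt8 (h : ℕ) (g : ℝ) (hg : g < Real.log (Real.sqrt 2))
    (τ : Vtx h → ℝ) (hτ : ∀ v, 0 < τ v ∧ τ v ≤ g) :
    ∑ v : Vtx h,
        (1 - Real.exp (-(2 * τ v))) * Real.exp (2 * Droot τ v) * (((2 : ℝ) ^ (v.1.1 + 1))⁻¹) ^ 2
      ≤ 1 / (1 - Real.exp (-2 * (Real.log (Real.sqrt 2) - g))) := by
  set s := Real.log (Real.sqrt 2) with hsdef
  have hs : Real.exp (2 * s) = 2 := by
    rw [show 2 * s = s + s by ring, Real.exp_add, hsdef,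
      Real.exp_log (Real.sqrt_pos.2 (by norm_num)), Real.mul_self_sqrt (by norm_num)]
  set r := Real.exp (2 * g) / 2 with hr
  have hr0 : 0 < r := by positivity
  have hr1 : r < 1 := by
    have h2 : Real.exp (2 * g) < 2 := by
      calc Real.exp (2 * g) < Real.exp (2 * s) := Real.exp_lt_exp.2 (by linarith)
        _ = 2 := hs
    rw [hr, div_lt_one (by norm_num)]
    exact h2
  have hre : Real.exp (-2 * (s - g)) = r := by
    rw [show -2 * (s - g) = 2 * g - 2 * s by ring, Real.exp_sub, hs]
  rw [hre]
  -- bound each term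
  have hD : ∀ v : Vtx h, Droot τ v ≤ (v.1.1 + 1) * g := by
    intro v
    unfold Droot
    calc ∑ j : Fin (v.1.1 + 1), τ (anc v j) ≤ ∑ _j : Fin (v.1.1 + 1), g :=
          Finset.sum_le_sum (fun j _ => (hτ _).2)
      _ = (v.1.1 + 1) * g := by
          simp [Finset.sum_const, nsmul_eq_mul]
  have key : ∀ v : Vtx h,
      (1 - Real.exp (-(2 * τ v))) * Real.exp (2 * Droot τ v) * (((2 : ℝ) ^ (v.1.1 + 1))⁻¹) ^ 2
        ≤ r ^ (v.1.1 + 1) / 2 ^ (v.1.1 + 1) := by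
    intro v
    have hA : (1 - Real.exp (-(2 * τ v))) ≤ 1 := by
      have := Real.exp_pos (-(2 * τ v)); linarith
    have hA0 : 0 ≤ (1 - Real.exp (-(2 * τ v))) := by
      have : Real.exp (-(2 * τ v)) ≤ 1 := by
        apply Real.exp_le_one_iff.2
        have := (hτ v).1; linarith
      linarith
    have hB : Real.exp (2 * Droot τ v) ≤ Real.exp (2 * g) ^ (v.1.1 + 1) := by
      rw [← Real.exp_nat_mul]
      apply Real.exp_le_exp.2
      have h1 := hD v
      calc 2 * Droot τ v ≤ 2 * ((v.1.1 + 1) * g) := by linarith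
        _ = (↑(v.1.1 + 1) : ℝ) * (2 * g) := by push_cast; ring
    have hC : (((2 : ℝ) ^ (v.1.1 + 1))⁻¹) ^ 2 = ((4 : ℝ) ^ (v.1.1 + 1))⁻¹ := by
      rw [← inv_pow, ← pow_mul, show (4:ℝ) = 2^2 by norm_num, ← pow_mul]
      ring_nf
      simp only [one_div]
    rw [hC]
    have hBC : Real.exp (2 * Droot τ v) * ((4 : ℝ) ^ (v.1.1 + 1))⁻¹
        ≤ Real.exp (2 * g) ^ (v.1.1 + 1) * ((4 : ℝ) ^ (v.1.1 + 1))⁻¹ := by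
      apply mul_le_mul_of_nonneg_right hB (by positivity)
    calc (1 - Real.exp (-(2 * τ v))) * Real.exp (2 * Droot τ v) * ((4 : ℝ) ^ (v.1.1 + 1))⁻¹
        ≤ 1 * (Real.exp (2 * Droot τ v) * ((4 : ℝ) ^ (v.1.1 + 1))⁻¹) := by
          rw [mul_assoc]
          apply mul_le_mul_of_nonneg_right hA (by positivity)
      _ ≤ Real.exp (2 * g) ^ (v.1.1 + 1) * ((4 : ℝ) ^ (v.1.1 + 1))⁻¹ := by
          rw [one_mul]; exact hBC
      _ = r ^ (v.1.1 + 1) / 2 ^ (v.1.1 + 1) := by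
          rw [hr, div_pow, show (4:ℝ) = 2 * 2 by norm_num, mul_pow]
          field_simp
  calc ∑ v : Vtx h,
        (1 - Real.exp (-(2 * τ v))) * Real.exp (2 * Droot τ v) * (((2 : ℝ) ^ (v.1.1 + 1))⁻¹) ^ 2
      ≤ ∑ v : Vtx h, r ^ (v.1.1 + 1) / 2 ^ (v.1.1 + 1) :=
        Finset.sum_le_sum (fun v _ => key v)
    _ = ∑ d : Fin h, ∑ _x : Fin (d.1 + 1) → Bool, r ^ (d.1 + 1) / 2 ^ (d.1 + 1) := by
        show ∑ v : (Σ d : Fin h, (Fin (d.1 + 1) → Bool)), r ^ (v.1.1 + 1) / 2 ^ (v.1.1 + 1) = _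
        rw [← Finset.univ_sigma_univ, Finset.sum_sigma]
    _ = ∑ d : Fin h, r ^ (d.1 + 1) := by
        apply Finset.sum_congr rfl
        intro d _
        rw [Finset.sum_const, Finset.card_univ, Fintype.card_fun]
        simp only [Fintype.card_bool, Fintype.card_fin, nsmul_eq_mul]
        push_cast
        field_simp
    _ = ∑ i ∈ Finset.range h, r ^ (i + 1) :=
        Fin.sum_univ_eq_sum_range (fun i => r ^ (i + 1)) h
    _ ≤ ∑ i ∈ Finset.range h, r ^ i := by
        apply Finset.sum_le_sum
        intro i _
        exact pow_le_pow_of_le_one hr0.le hr1.le (Nat.le_succ i)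
    _ ≤ 1 / (1 - r) := by
        rw [geom_sum_eq (by linarith : r ≠ 1)]
        have hpow : 0 ≤ r ^ h := pow_nonneg hr0.le h
        have heq : (r ^ h - 1) / (r - 1) = (1 - r ^ h) / (1 - r) := by
          rw [← neg_div_neg_eq]; ring_nf
        rw [heq, div_le_div_iff₀ (by linarith) (by linarith)]
        nlinarith
end

section
/- Let J = {t_1,…,t_m} be a multiset of real numbers and suppose there exists a value τ₀ and ε > 0 such that more than (2/3)m of the t_j satisfy |t_j - τ₀| < ε/3. Define the dense-ball radius r_j* = inf{r : |B_r(t_j) ∩ J| ≥ (2/3)m} and let j* = argmin_j r_j*. Then |t_{j*} - τ₀| ≤ ε. -/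
/-- dense-ball selection: if more than `2/3` of the multiset
`J = {t_1, …, t_m}` lies within `ε/3` of `τ₀`, and `r_j` is the dense-ball radius
`r_j = inf {r ≥ 0 : |B_r(t_j) ∩ J| ≥ (2/3) m}` (closed balls, multiset count), then any
minimizer `j*` of `r_j` satisfies `|t_{j*} - τ₀| ≤ ε`. -/
theorem stmt12 (m : ℕ) (t : Fin m → ℝ) (τ₀ ε : ℝ) (hε : 0 < ε)
    (hgood : (2 : ℝ) / 3 * m < (Nat.card {j : Fin m // |t j - τ₀| < ε / 3} : ℝ))
    (r : Fin m → ℝ)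
    (hr : ∀ j, r j = sInf {ρ : ℝ | 0 ≤ ρ ∧
      (2 : ℝ) / 3 * m ≤ (Nat.card {j' : Fin m // |t j' - t j| ≤ ρ} : ℝ)})
    (jstar : Fin m) (hmin : ∀ j, r jstar ≤ r j) :
    |t jstar - τ₀| ≤ ε := by
  classical
  set G : Finset (Fin m) := Finset.univ.filter (fun j => |t j - τ₀| < ε / 3) with hGdef
  have hcardG : (Nat.card {j : Fin m // |t j - τ₀| < ε / 3} : ℝ) = (G.card : ℝ) := by
    rw [Nat.card_eq_fintype_card, Fintype.card_subtype]
  rw [hcardG] at hgood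
  have hmnn : (0 : ℝ) ≤ (2 : ℝ) / 3 * m := by positivity
  have hGpos : 0 < G.card := by
    rcases Nat.eq_zero_or_pos G.card with h | h
    · rw [h] at hgood; norm_num at hgood; linarith
    · exact h
  have hGne : G.Nonempty := Finset.card_pos.mp hGpos
  obtain ⟨j₀, hj₀⟩ := hGne
  have hj₀good : |t j₀ - τ₀| < ε / 3 := by
    simpa [hGdef] using hj₀
  have hGm : G.card ≤ m := by
    have h := Finset.card_le_card (Finset.filter_subset
      (fun j => |t j - τ₀| < ε / 3) (Finset.univ : Finset (Fin m)))
    simpa using h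
  have hmpos : 0 < m := lt_of_lt_of_le hGpos hGm
  have huniv_ne : (Finset.univ : Finset (Fin m)).Nonempty := by
    simpa [Finset.univ_nonempty_iff] using Fin.pos_iff_nonempty.mp hmpos
  -- counting lemma
  have hcount : ∀ (j : Fin m) (ρ : ℝ),
      (Nat.card {j' : Fin m // |t j' - t j| ≤ ρ} : ℝ)
        = ((Finset.univ.filter fun j' => |t j' - t j| ≤ ρ).card : ℝ) := by
    intro j ρ
    rw [Nat.card_eq_fintype_card, Fintype.card_subtype]
  have hbdd : ∀ j : Fin m, BddBelow {ρ : ℝ | 0 ≤ ρ ∧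
      (2 : ℝ) / 3 * m ≤ (Nat.card {j' : Fin m // |t j' - t j| ≤ ρ} : ℝ)} :=
    fun j => ⟨0, fun ρ hρ => hρ.1⟩
  -- S_jstar is nonempty
  set ρbig : ℝ := Finset.univ.sup' huniv_ne (fun j' => |t j' - t jstar|) with hρbig
  have hρbig_mem : ρbig ∈ {ρ : ℝ | 0 ≤ ρ ∧
      (2 : ℝ) / 3 * m ≤ (Nat.card {j' : Fin m // |t j' - t jstar| ≤ ρ} : ℝ)} := by
    constructor
    · rw [hρbig]
      exact le_trans (abs_nonneg _) (Finset.le_sup' (fun j' => |t j' - t jstar|) (Finset.mem_univ jstar))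
    · rw [hcount]
      have : (Finset.univ.filter fun j' => |t j' - t jstar| ≤ ρbig) = Finset.univ := by
        apply Finset.filter_true_of_mem
        intro j' _
        rw [hρbig]
        exact Finset.le_sup' (fun j' => |t j' - t jstar|) (Finset.mem_univ j')
      rw [this]
      simp only [Finset.card_univ, Fintype.card_fin]
      nlinarith [Nat.cast_nonneg (α := ℝ) m]
  -- For the good point j₀, r j₀ < 2ε/3
  have hGne' : G.Nonempty := ⟨j₀, hj₀⟩
  set ρ₀ : ℝ := G.sup' hGne' (fun j' => |t j' - t j₀|) with hρ₀
  have hρ₀lt : ρ₀ < 2 * ε / 3 := by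
    rw [hρ₀, Finset.sup'_lt_iff]
    intro j' hj'
    have hj'good : |t j' - τ₀| < ε / 3 := by simpa [hGdef] using hj'
    calc |t j' - t j₀| ≤ |t j' - τ₀| + |τ₀ - t j₀| := abs_sub_le _ _ _
      _ < ε / 3 + ε / 3 := by
          have h2 : |τ₀ - t j₀| = |t j₀ - τ₀| := abs_sub_comm _ _
          rw [h2]; linarith
      _ = 2 * ε / 3 := by ring
  have hρ₀mem : ρ₀ ∈ {ρ : ℝ | 0 ≤ ρ ∧
      (2 : ℝ) / 3 * m ≤ (Nat.card {j' : Fin m // |t j' - t j₀| ≤ ρ} : ℝ)} := by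
    constructor
    · rw [hρ₀]
      exact le_trans (abs_nonneg _) (Finset.le_sup' (fun j' => |t j' - t j₀|) hj₀)
    · rw [hcount]
      have hsub : G ⊆ Finset.univ.filter fun j' => |t j' - t j₀| ≤ ρ₀ := by
        intro j' hj'
        simp only [Finset.mem_filter, Finset.mem_univ, true_and]
        rw [hρ₀]
        exact Finset.le_sup' (fun j' => |t j' - t j₀|) hj'
      have := Finset.card_le_card hsub
      calc (2 : ℝ) / 3 * m ≤ (G.card : ℝ) := le_of_lt hgood
        _ ≤ _ := Nat.cast_le.mpr this
  have hrj₀ : r j₀ ≤ ρ₀ := by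
    rw [hr j₀]
    exact csInf_le (hbdd j₀) hρ₀mem
  -- main argument by contradiction
  by_contra hcon
  push_neg at hcon
  have hlb : ∀ ρ ∈ {ρ : ℝ | 0 ≤ ρ ∧
      (2 : ℝ) / 3 * m ≤ (Nat.card {j' : Fin m // |t j' - t jstar| ≤ ρ} : ℝ)},
      2 * ε / 3 ≤ ρ := by
    intro ρ hρ
    by_contra hlt
    push_neg at hlt
    obtain ⟨hρ0, hρc⟩ := hρ
    rw [hcount] at hρc
    -- all points in the ball are bad
    have hsub : (Finset.univ.filter fun j' => |t j' - t jstar| ≤ ρ)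
        ⊆ Finset.univ.filter fun j' => ¬ |t j' - τ₀| < ε / 3 := by
      intro j' hj'
      simp only [Finset.mem_filter, Finset.mem_univ, true_and] at hj' ⊢
      intro hgoodj'
      have : |t jstar - τ₀| ≤ |t jstar - t j'| + |t j' - τ₀| := abs_sub_le _ _ _
      rw [abs_sub_comm (t jstar) (t j')] at this
      linarith
    have hbadcard : (Finset.univ.filter fun j' => ¬ |t j' - τ₀| < ε / 3).card
        = m - G.card := by
      have := Finset.card_filter_add_card_filter_not
        (s := (Finset.univ : Finset (Fin m))) (p := fun j => |t j - τ₀| < ε / 3)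
      simp only [Finset.card_univ, Fintype.card_fin] at this
      have hGc : G.card = (Finset.univ.filter fun j => |t j - τ₀| < ε / 3).card := rfl
      omega
    have hle := Finset.card_le_card hsub
    rw [hbadcard] at hle
    have hcast : ((m - G.card : ℕ) : ℝ) = (m : ℝ) - (G.card : ℝ) := by
      push_cast [Nat.cast_sub hGm]; ring
    have : (2 : ℝ) / 3 * m ≤ (m : ℝ) - (G.card : ℝ) := by
      calc (2 : ℝ) / 3 * m ≤ ((Finset.univ.filter fun j' => |t j' - t jstar| ≤ ρ).card : ℝ) := hρc
        _ ≤ ((m - G.card : ℕ) : ℝ) := Nat.cast_le.mpr hle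
        _ = (m : ℝ) - (G.card : ℝ) := hcast
    linarith
  have hrstar : 2 * ε / 3 ≤ r jstar := by
    rw [hr jstar]
    exact le_csInf ⟨ρbig, hρbig_mem⟩ hlb
  have := hmin j₀
  linarith
end
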